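/- arXiv:1004.0408 — 3 statements merged into one kernel-verified Lean document; each statement's English description precedes it below -/
import Mathlib

section
/- Let i ∈ ℕ and let (m_n) be a sequence of positive integers and (μ_n) a sequence in (0,∞) such that m_n → ∞, μ_n → 0 and m_n^γ·μ_n → C as n → ∞ for some constant C ∈ [0, b/(1−γ)). Then limsup_{n→∞} Σ_{k=0}^{m_n} k^i·w(k)·e^{μ_n·k} < ∞. -/
open Filter Topology

/-- Zero-range jump rates: `g 0 = 0`, `g n = 1 + b / n ^ γ` for `n ≥ 1`. -/
noncomputable def zrpG (b γ : ℝ) (n : ℕ) : ℝ := if n = 0 then 0 else 1 + b / (n : ℝ) ^ γ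

/-- Stationary weights: `w 0 = 1`, `w n = ∏_{k=1}^n 1 / g k`. -/
noncomputable def zrpW (b γ : ℝ) (n : ℕ) : ℝ := ∏ k ∈ Finset.Icc 1 n, (zrpG b γ k)⁻¹

/-- Single-site partition function `z φ = Σ_{k≥0} w k · φ^k`. -/
noncomputable def zrpZfun (b γ φ : ℝ) : ℝ := ∑' k : ℕ, zrpW b γ k * φ ^ k

/-- Critical density `ρ_c = (Σ k·w k) / z 1`. -/
noncomputable def zrpRhoC (b γ : ℝ) : ℝ :=
  (∑' k : ℕ, (k : ℝ) * zrpW b γ k) / (∑' k : ℕ, zrpW b γ k)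

/-- Critical variance `σ_c² = (Σ k²·w k) / z 1 − ρ_c²`. -/
noncomputable def zrpSigmaSq (b γ : ℝ) : ℝ :=
  (∑' k : ℕ, (k : ℝ) ^ 2 * zrpW b γ k) / (∑' k : ℕ, zrpW b γ k) - (zrpRhoC b γ) ^ 2

/-- Truncated partition function `z_m(φ) = Σ_{k=0}^m w k · φ^k`. -/
noncomputable def zrpZtrunc (b γ : ℝ) (m : ℕ) (φ : ℝ) : ℝ :=
  ∑ k ∈ Finset.range (m + 1), zrpW b γ k * φ ^ k

/-- Truncated density function `R_m(φ) = (Σ_{k=0}^m k·w k·φ^k) / z_m(φ)`. -/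
noncomputable def zrpRtrunc (b γ : ℝ) (m : ℕ) (φ : ℝ) : ℝ :=
  (∑ k ∈ Finset.range (m + 1), (k : ℝ) * zrpW b γ k * φ ^ k) / zrpZtrunc b γ m φ

/-- Canonical partition function `Z(L,N) = Σ_{η : Fin L → ℕ, Σ η = N} ∏ w (η x)`. -/
noncomputable def zrpZc (b γ : ℝ) (L N : ℕ) : ℝ :=
  ∑ η ∈ (Fintype.piFinset fun _ : Fin L => Finset.range (N + 1)).filter
      (fun η => ∑ x, η x = N),
    ∏ x, zrpW b γ (η x)

/-- Cut-off canonical partition function, restricting to `η x ≤ m` for all `x`. -/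
noncomputable def zrpQc (b γ : ℝ) (L N m : ℕ) : ℝ :=
  ∑ η ∈ (Fintype.piFinset fun _ : Fin L => Finset.range (N + 1)).filter
      (fun η => ∑ x, η x = N ∧ ∀ x, η x ≤ m),
    ∏ x, zrpW b γ (η x)

/-- Finite-size rate function `I_{L,N}(m)`. -/
noncomputable def zrpI (b γ : ℝ) (L N m : ℕ) : ℝ :=
  -(1 / (L : ℝ)) * Real.log ((zrpQc b γ L N m - zrpQc b γ L N (m - 1)) / zrpZc b γ L N)

/-!
For `b' < b` and large `j` we have `1 / g j ≤ exp (-b' j^{-γ})`, and `Σ_{j ≤ k} j^{-γ}` is at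
least `(k^{1-γ} - 1) / (1 - γ)`, so `w k ≤ A exp (-b' k^{1-γ} / (1 - γ))`. For `k ≤ m_n` the
tilt satisfies `μ_n k ≤ (m_n^γ μ_n) k^{1-γ} ≤ θ k^{1-γ}` eventually, for any `θ > C`. Choosing
`θ (1 - γ) < b' < b`, every truncated sum is bounded by `A Σ_k k^i exp (-ε k^{1-γ})` with
`ε = b' / (1 - γ) - θ > 0`, a convergent series independent of `n`.
-/

namespace Real

theorem rpow_add_one_sub_rpow_le {x p : ℝ} (hx : 0 < x) (hp0 : 0 ≤ p) (hp1 : p ≤ 1) :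
    (x + 1) ^ p - x ^ p ≤ p * x ^ (p - 1) := by
  have hbern : (1 + x⁻¹) ^ p ≤ 1 + p * x⁻¹ :=
    rpow_one_add_le_one_add_mul_self (by linarith [inv_pos.mpr hx]) hp0 hp1
  have hsplit : (x + 1) ^ p = x ^ p * (1 + x⁻¹) ^ p := by
    rw [← mul_rpow hx.le (by positivity), mul_add, mul_inv_cancel₀ hx.ne', mul_one]
  calc (x + 1) ^ p - x ^ p ≤ x ^ p * (1 + p * x⁻¹) - x ^ p := by
        rw [hsplit]; gcongr
    _ = p * x ^ (p - 1) := by rw [rpow_sub_one hx.ne']; ring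

theorem exp_mul_le_one_add_mul {b b' t : ℝ} (hb' : 0 ≤ b') (hb'b : b' < b) (ht : 0 ≤ t)
    (hsmall : b * b' * t ≤ b - b') : exp (b' * t) ≤ 1 + b * t := by
  have hb : 0 < b := hb'.trans_lt hb'b
  have hlt : b' * t < 1 := by
    by_contra! h
    nlinarith [mul_le_mul_of_nonneg_left h hb.le]
  calc exp (b' * t) ≤ 1 / (1 - b' * t) := exp_bound_div_one_sub_of_interval (by positivity) hlt
    _ ≤ 1 + b * t := by
      rw [div_le_iff₀ (by linarith)]
      nlinarith

end Real

open Real Finset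

theorem rpow_sub_one_le_mul_sum_rpow {p : ℝ} (hp0 : 0 ≤ p) (hp1 : p ≤ 1) (k : ℕ) :
    ((k : ℝ) + 1) ^ p - 1 ≤ p * ∑ j ∈ Icc 1 k, (j : ℝ) ^ (p - 1) := by
  induction k with
  | zero => simp
  | succ k ih =>
    rw [sum_Icc_succ_top (by omega), mul_add]
    have := rpow_add_one_sub_rpow_le (x := (k : ℝ) + 1) (by positivity) hp0 hp1
    push_cast
    linarith

theorem exists_forall_le_of_eventually_succ_le {f : ℕ → ℝ}
    (h : ∀ᶠ k in atTop, f (k + 1) ≤ f k) : ∃ A, ∀ k, f k ≤ A := by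
  obtain ⟨N, hN⟩ := eventually_atTop.mp h
  refine ⟨(range (N + 1)).sup' nonempty_range_add_one f, fun k => ?_⟩
  rcases le_total k N with hk | hk
  · exact le_sup' f (mem_range.mpr (by omega))
  · exact (antitoneOn_nat_Ici_of_succ_le hN (Set.mem_Ici.mpr le_rfl) hk hk).trans
      (le_sup' f (mem_range.mpr (by omega)))

theorem summable_pow_mul_exp_neg_mul_rpow (i : ℕ) {ε p : ℝ} (hε : 0 < ε) (hp : 0 < p) :
    Summable fun k : ℕ => (k : ℝ) ^ i * exp (-ε * (k : ℝ) ^ p) := by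
  have hdecay : ∀ᶠ k : ℕ in atTop, (k : ℝ) ^ (i + 2) * exp (-ε * (k : ℝ) ^ p) ≤ 1 := by
    have hlim := (tendsto_rpow_mul_exp_neg_mul_atTop_nhds_zero ((i + 2) / p) ε hε).comp
      ((tendsto_rpow_atTop hp).comp tendsto_natCast_atTop_atTop)
    filter_upwards [hlim.eventually (ge_mem_nhds one_pos)] with k hk
    rwa [Function.comp_apply, Function.comp_apply, ← rpow_mul (Nat.cast_nonneg k),
      show p * ((i + 2) / p) = ((i + 2 : ℕ) : ℝ) by push_cast; field_simp, rpow_natCast] at hk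
  refine (summable_nat_pow_inv.mpr one_lt_two).of_norm_bounded_eventually_nat ?_
  filter_upwards [hdecay, eventually_gt_atTop 0] with k hk hk0
  have hk0 : (k : ℝ) ≠ 0 := by positivity
  rw [norm_of_nonneg (by positivity)]
  calc (k : ℝ) ^ i * exp (-ε * (k : ℝ) ^ p)
      = (k : ℝ) ^ (i + 2) * exp (-ε * (k : ℝ) ^ p) / (k : ℝ) ^ 2 := by
        rw [pow_add]; field_simp
    _ ≤ ((k : ℝ) ^ 2)⁻¹ := by
        rw [div_eq_mul_inv]; exact mul_le_of_le_one_left (by positivity) hk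

theorem mul_le_mul_rpow_one_sub_of_rpow_mul_le {γ μ θ k m : ℝ} (hγ : 0 ≤ γ) (hμ : 0 ≤ μ)
    (hk : 0 ≤ k) (hkm : k ≤ m) (h : m ^ γ * μ ≤ θ) : μ * k ≤ θ * k ^ (1 - γ) := by
  rcases hk.eq_or_lt with rfl | hk
  · have hθ : 0 ≤ θ := le_trans (by positivity) h
    simpa using mul_nonneg hθ (rpow_nonneg le_rfl (1 - γ))
  calc μ * k = k ^ γ * μ * k ^ (1 - γ) := by
        rw [mul_comm (k ^ γ), mul_assoc, ← rpow_add hk, add_sub_cancel, rpow_one]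
    _ ≤ θ * k ^ (1 - γ) := by
        gcongr
        exact h.trans' (by gcongr)

theorem sum_pow_mul_mul_exp_le_tsum {w : ℕ → ℝ} {A a θ p μ : ℝ} {m : ℕ} (i : ℕ)
    (hA : 0 ≤ A) (hp : 0 < p) (hθa : θ < a) (hw : ∀ k, w k ≤ A * exp (-a * (k : ℝ) ^ p))
    (hμ : ∀ k ≤ m, μ * k ≤ θ * (k : ℝ) ^ p) :
    ∑ k ∈ range (m + 1), (k : ℝ) ^ i * w k * exp (μ * k) ≤
      A * ∑' k : ℕ, (k : ℝ) ^ i * exp (-(a - θ) * (k : ℝ) ^ p) := by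
  rw [← tsum_mul_left]
  refine (sum_le_sum fun k hk => ?_).trans
    (Summable.sum_le_tsum _ (fun k _ => by positivity)
      ((summable_pow_mul_exp_neg_mul_rpow i (sub_pos.mpr hθa) hp).mul_left A))
  calc (k : ℝ) ^ i * w k * exp (μ * k)
      ≤ (k : ℝ) ^ i * (A * exp (-a * (k : ℝ) ^ p)) * exp (θ * (k : ℝ) ^ p) := by
        gcongr _ * ?_ * exp ?_
        · exact hw k
        · exact hμ k (Nat.lt_succ_iff.mp (mem_range.mp hk))
    _ = A * ((k : ℝ) ^ i * exp (-(a - θ) * (k : ℝ) ^ p)) := by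
        rw [mul_assoc, mul_assoc, ← exp_add]; ring_nf

theorem zrpG_eq {b γ : ℝ} {j : ℕ} (hj : j ≠ 0) : zrpG b γ j = 1 + b * (j : ℝ) ^ (-γ) := by
  rw [zrpG, if_neg hj, rpow_neg (Nat.cast_nonneg j), div_eq_mul_inv]

theorem zrpW_zero (b γ : ℝ) : zrpW b γ 0 = 1 := by simp [zrpW]

theorem zrpW_succ (b γ : ℝ) (k : ℕ) : zrpW b γ (k + 1) = zrpW b γ k * (zrpG b γ (k + 1))⁻¹ :=
  prod_Icc_succ_top (by omega) _

theorem zrpW_nonneg {b : ℝ} (hb : 0 ≤ b) (γ : ℝ) (k : ℕ) : 0 ≤ zrpW b γ k :=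
  prod_nonneg fun j hj => by
    rw [zrpG_eq (by grind)]
    positivity

theorem eventually_inv_zrpG_le_exp {b b' γ : ℝ} (hγ : 0 < γ) (hb' : 0 ≤ b') (hb'b : b' < b) :
    ∀ᶠ j : ℕ in atTop, (zrpG b γ j)⁻¹ ≤ exp (-(b' * (j : ℝ) ^ (-γ))) := by
  have hsmall : Tendsto (fun j : ℕ => b * b' * (j : ℝ) ^ (-γ)) atTop (𝓝 0) := by
    simpa using ((tendsto_rpow_neg_atTop hγ).comp tendsto_natCast_atTop_atTop).const_mul (b * b')
  filter_upwards [hsmall.eventually (ge_mem_nhds (sub_pos.mpr hb'b)), eventually_ne_atTop 0]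
    with j hj hj0
  rw [exp_neg, zrpG_eq hj0]
  exact inv_anti₀ (exp_pos _)
    (exp_mul_le_one_add_mul hb' hb'b (rpow_nonneg (Nat.cast_nonneg j) _) hj)

-- `w k · exp (b' Σ_{j ≤ k} j^{-γ})` is eventually nonincreasing, hence bounded.
theorem exists_zrpW_le_exp_neg_mul_sum {b b' γ : ℝ} (hγ : 0 < γ) (hb' : 0 ≤ b') (hb'b : b' < b) :
    ∃ A, 1 ≤ A ∧ ∀ k, zrpW b γ k ≤ A * exp (-(b' * ∑ j ∈ Icc 1 k, (j : ℝ) ^ (-γ))) := by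
  set f : ℕ → ℝ := fun k => zrpW b γ k * exp (b' * ∑ j ∈ Icc 1 k, (j : ℝ) ^ (-γ))
  have hf : ∀ᶠ k in atTop, f (k + 1) ≤ f k := by
    filter_upwards [(tendsto_add_atTop_nat 1).eventually (eventually_inv_zrpG_le_exp hγ hb' hb'b)]
      with k hk
    have hfac : (zrpG b γ (k + 1))⁻¹ * exp (b' * ((k + 1 : ℕ) : ℝ) ^ (-γ)) ≤ 1 := by
      refine (mul_le_mul_of_nonneg_right hk (exp_pos _).le).trans_eq ?_
      rw [← exp_add, neg_add_cancel, exp_zero]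
    calc f (k + 1) = f k * ((zrpG b γ (k + 1))⁻¹ * exp (b' * ((k + 1 : ℕ) : ℝ) ^ (-γ))) := by
          simp only [f, zrpW_succ, sum_Icc_succ_top (Nat.le_add_left 1 k), mul_add, exp_add]
          ring
      _ ≤ f k := mul_le_of_le_one_right
          (mul_nonneg (zrpW_nonneg (hb'.trans hb'b.le) γ k) (exp_pos _).le) hfac
  obtain ⟨A, hA⟩ := exists_forall_le_of_eventually_succ_le hf
  refine ⟨A, by simpa [f, zrpW_zero] using hA 0, fun k => ?_⟩
  calc zrpW b γ k = f k * exp (-(b' * ∑ j ∈ Icc 1 k, (j : ℝ) ^ (-γ))) := by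
        simp only [f, mul_assoc, ← exp_add, add_neg_cancel, exp_zero, mul_one]
    _ ≤ A * exp (-(b' * ∑ j ∈ Icc 1 k, (j : ℝ) ^ (-γ))) := by gcongr; exact hA k

theorem exists_zrpW_le_exp_neg_mul_rpow {b b' γ : ℝ} (hγ0 : 0 < γ) (hγ1 : γ < 1) (hb' : 0 ≤ b')
    (hb'b : b' < b) :
    ∃ A, 0 ≤ A ∧ ∀ k : ℕ, zrpW b γ k ≤ A * exp (-(b' / (1 - γ)) * (k : ℝ) ^ (1 - γ)) := by
  obtain ⟨A, hA, hw⟩ := exists_zrpW_le_exp_neg_mul_sum hγ0 hb' hb'b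
  refine ⟨A * exp (b' / (1 - γ)), by positivity, fun k => (hw k).trans ?_⟩
  have h1γ : 0 < 1 - γ := sub_pos.mpr hγ1
  have hsum := rpow_sub_one_le_mul_sum_rpow h1γ.le (by linarith) k
  rw [sub_sub_cancel_left] at hsum
  have hk : (k : ℝ) ^ (1 - γ) ≤ ((k : ℝ) + 1) ^ (1 - γ) := by gcongr; linarith
  rw [mul_assoc, ← exp_add]
  gcongr
  have hpow : (k : ℝ) ^ (1 - γ) - 1 ≤ (1 - γ) * ∑ j ∈ Icc 1 k, (j : ℝ) ^ (-γ) := by linarith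
  rw [neg_mul, div_mul_eq_mul_div, ← neg_div, ← add_div, le_div_iff₀ h1γ]
  nlinarith [mul_le_mul_of_nonneg_left hpow hb']

theorem truncated_moments_bounded_general (b γ : ℝ) (hγ0 : 0 < γ) (hγ1 : γ < 1) (hb : 0 < b)
    (i : ℕ) (m : ℕ → ℕ) (μ : ℕ → ℝ) (C : ℝ)
    (hμpos : ∀ n, 0 < μ n)
    (hC : Tendsto (fun n => (m n : ℝ) ^ γ * μ n) atTop (nhds C))
    (hCb : C < b / (1 - γ)) :
    Filter.limsup
      (fun n => ((∑ k ∈ Finset.range (m n + 1),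
        (k : ℝ) ^ i * zrpW b γ k * Real.exp (μ n * k) : ℝ) : EReal)) atTop < ⊤ := by
  have h1γ : 0 < 1 - γ := sub_pos.mpr hγ1
  obtain ⟨θ, hCθ, hθb⟩ := exists_between hCb
  rw [lt_div_iff₀ h1γ] at hθb
  obtain ⟨b', hb'θ, hb'b⟩ := exists_between (max_lt hθb hb)
  obtain ⟨A, hA, hw⟩ :=
    exists_zrpW_le_exp_neg_mul_rpow hγ0 hγ1 ((le_max_right _ _).trans hb'θ.le) hb'b
  have hθa : θ < b' / (1 - γ) := (lt_div_iff₀ h1γ).mpr ((le_max_left _ _).trans_lt hb'θ)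
  have hbound : ∀ᶠ n in atTop, ∑ k ∈ range (m n + 1), (k : ℝ) ^ i * zrpW b γ k * exp (μ n * k) ≤
      A * ∑' k : ℕ, (k : ℝ) ^ i * exp (-(b' / (1 - γ) - θ) * (k : ℝ) ^ (1 - γ)) := by
    filter_upwards [hC.eventually (ge_mem_nhds hCθ)] with n hn
    exact sum_pow_mul_mul_exp_le_tsum i hA h1γ hθa hw fun k hk =>
      mul_le_mul_rpow_one_sub_of_rpow_mul_le hγ0.le (hμpos n).le (Nat.cast_nonneg k)
        (Nat.cast_le.mpr hk) hn
  exact (limsup_le_of_le (by isBoundedDefault)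
    (hbound.mono fun n hn => EReal.coe_le_coe_iff.mpr hn)).trans_lt (EReal.coe_lt_top _)

/-- If `m_n → ∞`, `μ_n → 0`, `μ_n > 0` and `m_n^γ · μ_n → C` with
`0 ≤ C < b/(1−γ)`, then `limsup_n Σ_{k=0}^{m_n} k^i · w(k) · e^{μ_n k} < ∞`. -/
theorem truncated_moments_bounded (b γ : ℝ) (hγ0 : 0 < γ) (hγ1 : γ < 1) (hb : 0 < b)
    (i : ℕ) (m : ℕ → ℕ) (μ : ℕ → ℝ) (C : ℝ)
    (hmpos : ∀ n, 0 < m n) (hμpos : ∀ n, 0 < μ n)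
    (hm : Tendsto m atTop atTop) (hμ : Tendsto μ atTop (nhds 0))
    (hC : Tendsto (fun n => (m n : ℝ) ^ γ * μ n) atTop (nhds C))
    (hC0 : 0 ≤ C) (hCb : C < b / (1 - γ)) :
    Filter.limsup
      (fun n => ((∑ k ∈ Finset.range (m n + 1),
        (k : ℝ) ^ i * zrpW b γ k * Real.exp (μ n * k) : ℝ) : EReal)) atTop < ⊤ :=
  truncated_moments_bounded_general b γ hγ0 hγ1 hb i m μ C hμpos hC hCb
end

section
/- Let σ² > 0 be the critical variance and set c_0 = ((1+γ)/γ)·(σ²·γ·b)^{1/(1+γ)}. For δρ > 0, consider the current matching equation r/σ² = b/(δρ−r)^γ for r ∈ (0, δρ). If δρ < c_0 the equation has no solution in (0, δρ); if δρ = c_0 it has exactly one solution; and if δρ > c_0 it has exactly two solutions. -/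
open Filter Topology

/-!
Writing `A = σ²b`, the equation is `f r = A` for `f r = r (δρ - r)^γ`. On `[0, δρ]` the function
`f` vanishes at both ends, increases up to `p = δρ/(1+γ)` (where `f' = (δρ-r)^(γ-1)(δρ-(1+γ)r)`
changes sign) and decreases afterwards. Its peak value `(γδρ/(1+γ))^(1+γ)/γ` is strictly
increasing in `δρ` and equals `A` exactly at `δρ = c₀`, so the peak lies below, at, or above `A`
according as `δρ < c₀`, `δρ = c₀` or `δρ > c₀`, giving zero, one or two solutions.
-/

open Set

section Unimodal

variable {f : ℝ → ℝ} {a p b : ℝ}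

theorem le_of_strictMonoOn_of_strictAntiOn (hinc : StrictMonoOn f (Icc a p))
    (hdec : StrictAntiOn f (Icc p b)) {x : ℝ} (hx : x ∈ Icc a b) : f x ≤ f p := by
  rcases le_total x p with hxp | hpx
  · exact hinc.monotoneOn ⟨hx.1, hxp⟩ ⟨hx.1.trans hxp, le_rfl⟩ hxp
  · exact hdec.antitoneOn ⟨le_rfl, hpx.trans hx.2⟩ ⟨hpx, hx.2⟩ hpx

theorem eq_of_strictMonoOn_of_strictAntiOn (hinc : StrictMonoOn f (Icc a p))
    (hdec : StrictAntiOn f (Icc p b)) {x : ℝ} (hx : x ∈ Icc a b) (hfx : f x = f p) : x = p := by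
  rcases lt_trichotomy x p with hxp | hxp | hpx
  · exact absurd hfx (hinc ⟨hx.1, hxp.le⟩ ⟨hx.1.trans hxp.le, le_rfl⟩ hxp).ne
  · exact hxp
  · exact absurd hfx (hdec ⟨le_rfl, hpx.le.trans hx.2⟩ ⟨hpx.le, hx.2⟩ hpx).ne

theorem exists_pair_of_strictMonoOn_of_strictAntiOn (hf : ContinuousOn f (Icc a b))
    (hinc : StrictMonoOn f (Icc a p)) (hdec : StrictAntiOn f (Icc p b)) (hap : a ≤ p)
    (hpb : p ≤ b) {y : ℝ} (hay : f a < y) (hby : f b < y) (hyp : y < f p) :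
    ∃ r₁ ∈ Ioo a p, ∃ r₂ ∈ Ioo p b, f r₁ = y ∧ f r₂ = y ∧
      ∀ x ∈ Icc a b, f x = y → x = r₁ ∨ x = r₂ := by
  obtain ⟨r₁, hr₁, hfr₁⟩ :=
    intermediate_value_Ioo hap (hf.mono (Icc_subset_Icc_right hpb)) ⟨hay, hyp⟩
  obtain ⟨r₂, hr₂, hfr₂⟩ :=
    intermediate_value_Ioo' hpb (hf.mono (Icc_subset_Icc_left hap)) ⟨hby, hyp⟩
  refine ⟨r₁, hr₁, r₂, hr₂, hfr₁, hfr₂, fun x hx hfx => ?_⟩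
  rcases lt_or_gt_of_ne (show x ≠ p by rintro rfl; exact hyp.ne' hfx) with hxp | hpx
  · exact .inl (hinc.injOn ⟨hx.1, hxp.le⟩ (Ioo_subset_Icc_self hr₁) (hfx.trans hfr₁.symm))
  · exact .inr (hdec.injOn ⟨hpx.le, hx.2⟩ (Ioo_subset_Icc_self hr₂) (hfx.trans hfr₂.symm))

end Unimodal

section CurrentProfile

variable {γ d : ℝ}

theorem continuous_mul_rpow_sub (hγ : 0 ≤ γ) : Continuous fun r : ℝ => r * (d - r) ^ γ :=
  continuous_id.mul ((Real.continuous_rpow_const hγ).comp (continuous_const.sub continuous_id))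

theorem hasDerivAt_mul_rpow_sub {r : ℝ} (hr : r < d) :
    HasDerivAt (fun r : ℝ => r * (d - r) ^ γ) ((d - r) ^ (γ - 1) * (d - (1 + γ) * r)) r := by
  have hdr : d - r ≠ 0 := (sub_pos.2 hr).ne'
  have hsub : HasDerivAt (fun x : ℝ => (d - x) ^ γ) (γ * (d - r) ^ (γ - 1) * -1) r :=
    (Real.hasDerivAt_rpow_const (.inl hdr)).comp r ((hasDerivAt_id r).const_sub d)
  refine ((hasDerivAt_id r).mul hsub).congr_deriv ?_
  rw [id, Real.rpow_sub_one hdr]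
  field_simp
  ring

theorem strictMonoOn_mul_rpow_sub (hγ : 0 ≤ γ) :
    StrictMonoOn (fun r : ℝ => r * (d - r) ^ γ) (Icc 0 (d / (1 + γ))) := by
  refine strictMonoOn_of_deriv_pos (convex_Icc _ _) (continuous_mul_rpow_sub hγ).continuousOn
    fun r hr => ?_
  rw [interior_Icc, mem_Ioo, lt_div_iff₀ (by linarith)] at hr
  have hrd : r < d := by nlinarith
  rw [(hasDerivAt_mul_rpow_sub hrd).deriv]
  exact mul_pos (Real.rpow_pos_of_pos (sub_pos.2 hrd) _) (by linarith)

theorem strictAntiOn_mul_rpow_sub (hγ : 0 ≤ γ) :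
    StrictAntiOn (fun r : ℝ => r * (d - r) ^ γ) (Icc (d / (1 + γ)) d) := by
  refine strictAntiOn_of_deriv_neg (convex_Icc _ _) (continuous_mul_rpow_sub hγ).continuousOn
    fun r hr => ?_
  rw [interior_Icc, mem_Ioo, div_lt_iff₀ (by linarith)] at hr
  rw [(hasDerivAt_mul_rpow_sub hr.2).deriv]
  exact mul_neg_of_pos_of_neg (Real.rpow_pos_of_pos (sub_pos.2 hr.2) _) (by linarith)

theorem mul_rpow_sub_div_one_add (hγ : 0 < γ) (hd : 0 ≤ d) :
    d / (1 + γ) * (d - d / (1 + γ)) ^ γ = (γ * d / (1 + γ)) ^ (1 + γ) / γ := by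
  have hsub : d - d / (1 + γ) = γ * d / (1 + γ) := by field_simp; ring
  rw [hsub, Real.rpow_one_add' (by positivity) (by linarith)]
  field_simp

theorem strictMonoOn_rpow_mul_div_one_add (hγ : 0 < γ) :
    StrictMonoOn (fun d : ℝ => (γ * d / (1 + γ)) ^ (1 + γ) / γ) (Ici 0) := by
  intro x hx y hy hxy
  have hscale : γ * x / (1 + γ) < γ * y / (1 + γ) := by gcongr
  have hpow := Real.strictMonoOn_rpow_Ici_of_exponent_pos (by linarith : 0 < 1 + γ)
    (show 0 ≤ γ * x / (1 + γ) by simp only [mem_Ici] at hx; positivity)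
    (show 0 ≤ γ * y / (1 + γ) by simp only [mem_Ici] at hy; positivity) hscale
  exact div_lt_div_of_pos_right hpow hγ

theorem rpow_mul_div_one_add_threshold (hγ : 0 < γ) {A : ℝ} (hA : 0 ≤ A) :
    (γ * ((1 + γ) / γ * (γ * A) ^ (1 / (1 + γ))) / (1 + γ)) ^ (1 + γ) / γ = A := by
  have hscale : γ * ((1 + γ) / γ * (γ * A) ^ (1 / (1 + γ))) / (1 + γ)
      = (γ * A) ^ (1 + γ)⁻¹ := by
    rw [one_div]; field_simp
  rw [hscale, Real.rpow_inv_rpow (by positivity) (by linarith)]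
  field_simp

end CurrentProfile

theorem div_eq_div_rpow_sub_iff {σ b γ d r : ℝ} (hσ : σ ≠ 0) (hr : r < d) :
    r / σ = b / (d - r) ^ γ ↔ r * (d - r) ^ γ = σ * b := by
  rw [div_eq_div_iff hσ (Real.rpow_pos_of_pos (sub_pos.2 hr) _).ne', mul_comm σ]

theorem current_matching_solutions_general (b γ : ℝ) (hγ0 : 0 < γ) (hb : 0 < b)
    (hσ : 0 < zrpSigmaSq b γ) (δρ : ℝ) (hδρ : 0 < δρ)
    (c₀ : ℝ) (hc₀ : c₀ = (1 + γ) / γ * (zrpSigmaSq b γ * γ * b) ^ (1 / (1 + γ))) :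
    (δρ < c₀ → ¬ ∃ r, r ∈ Set.Ioo (0 : ℝ) δρ ∧
      r / zrpSigmaSq b γ = b / (δρ - r) ^ γ) ∧
    (δρ = c₀ → ∃! r, r ∈ Set.Ioo (0 : ℝ) δρ ∧
      r / zrpSigmaSq b γ = b / (δρ - r) ^ γ) ∧
    (c₀ < δρ → ∃ r₁ r₂ : ℝ, r₁ ≠ r₂ ∧
      r₁ ∈ Set.Ioo (0 : ℝ) δρ ∧ r₁ / zrpSigmaSq b γ = b / (δρ - r₁) ^ γ ∧
      r₂ ∈ Set.Ioo (0 : ℝ) δρ ∧ r₂ / zrpSigmaSq b γ = b / (δρ - r₂) ^ γ ∧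
      ∀ r ∈ Set.Ioo (0 : ℝ) δρ,
        r / zrpSigmaSq b γ = b / (δρ - r) ^ γ → r = r₁ ∨ r = r₂) := by
  set σ2 := zrpSigmaSq b γ
  set f : ℝ → ℝ := fun r => r * (δρ - r) ^ γ
  set peak : ℝ → ℝ := fun d => (γ * d / (1 + γ)) ^ (1 + γ) / γ
  have hA : 0 < σ2 * b := mul_pos hσ hb
  have hp : δρ / (1 + γ) ∈ Ioo 0 δρ :=
    ⟨by positivity, div_lt_self hδρ (by linarith)⟩
  have hinc := strictMonoOn_mul_rpow_sub hγ0.le (d := δρ)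
  have hdec := strictAntiOn_mul_rpow_sub hγ0.le (d := δρ)
  have hfp : f (δρ / (1 + γ)) = peak δρ := mul_rpow_sub_div_one_add hγ0 hδρ.le
  have hpeak_c₀ : peak c₀ = σ2 * b := by
    rw [hc₀, show σ2 * γ * b = γ * (σ2 * b) by ring]
    exact rpow_mul_div_one_add_threshold hγ0 hA.le
  have hc₀0 : c₀ ∈ Ici 0 := mem_Ici.2 (by rw [hc₀]; positivity)
  have hpeak := strictMonoOn_rpow_mul_div_one_add hγ0
  have hsol : ∀ r ∈ Ioo 0 δρ, (r / σ2 = b / (δρ - r) ^ γ ↔ f r = σ2 * b) :=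
    fun r hr => div_eq_div_rpow_sub_iff hσ.ne' hr.2
  refine ⟨?_, ?_, ?_⟩
  · rintro hlt ⟨r, hr, hrsol⟩
    have hfr := le_of_strictMonoOn_of_strictAntiOn hinc hdec (Ioo_subset_Icc_self hr)
    have hlow : peak δρ < peak c₀ := hpeak hδρ.le hc₀0 hlt
    linarith [(hsol r hr).1 hrsol]
  · rintro rfl
    have hfpA : f (δρ / (1 + γ)) = σ2 * b := hfp.trans hpeak_c₀
    refine ⟨δρ / (1 + γ), ⟨hp, (hsol _ hp).2 hfpA⟩, fun r ⟨hr, hrsol⟩ => ?_⟩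
    exact eq_of_strictMonoOn_of_strictAntiOn hinc hdec (Ioo_subset_Icc_self hr)
      (((hsol r hr).1 hrsol).trans hfpA.symm)
  · intro hgt
    have hhigh : σ2 * b < f (δρ / (1 + γ)) := hfp ▸ hpeak_c₀ ▸ hpeak hc₀0 hδρ.le hgt
    have hf0 : f 0 < σ2 * b := by simpa [f] using hA
    have hfδρ : f δρ < σ2 * b := by simpa [f, Real.zero_rpow hγ0.ne'] using hA
    obtain ⟨r₁, hr₁, r₂, hr₂, hfr₁, hfr₂, honly⟩ :=
      exists_pair_of_strictMonoOn_of_strictAntiOn (continuous_mul_rpow_sub hγ0.le).continuousOn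
        hinc hdec hp.1.le hp.2.le hf0 hfδρ hhigh
    have hr₁' : r₁ ∈ Ioo 0 δρ := ⟨hr₁.1, hr₁.2.trans hp.2⟩
    have hr₂' : r₂ ∈ Ioo 0 δρ := ⟨hp.1.trans hr₂.1, hr₂.2⟩
    refine ⟨r₁, r₂, (hr₁.2.trans hr₂.1).ne, hr₁', (hsol r₁ hr₁').2 hfr₁, hr₂',
      (hsol r₂ hr₂').2 hfr₂, fun r hr hrsol => ?_⟩
    exact honly r (Ioo_subset_Icc_self hr) ((hsol r hr).1 hrsol)

/-- with `σ² = σ_c² > 0` and `c₀ = ((1+γ)/γ)·(σ²γb)^{1/(1+γ)}`, the current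
matching equation `r/σ² = b/(δρ−r)^γ` on `(0,δρ)` has no solution if `δρ < c₀`, exactly one
if `δρ = c₀`, and exactly two if `δρ > c₀`. -/
theorem current_matching_solutions (b γ : ℝ) (hγ0 : 0 < γ) (hγ1 : γ < 1) (hb : 0 < b)
    (hσ : 0 < zrpSigmaSq b γ) (δρ : ℝ) (hδρ : 0 < δρ)
    (c₀ : ℝ) (hc₀ : c₀ = (1 + γ) / γ * (zrpSigmaSq b γ * γ * b) ^ (1 / (1 + γ))) :
    (δρ < c₀ → ¬ ∃ r, r ∈ Set.Ioo (0 : ℝ) δρ ∧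
      r / zrpSigmaSq b γ = b / (δρ - r) ^ γ) ∧
    (δρ = c₀ → ∃! r, r ∈ Set.Ioo (0 : ℝ) δρ ∧
      r / zrpSigmaSq b γ = b / (δρ - r) ^ γ) ∧
    (c₀ < δρ → ∃ r₁ r₂ : ℝ, r₁ ≠ r₂ ∧
      r₁ ∈ Set.Ioo (0 : ℝ) δρ ∧ r₁ / zrpSigmaSq b γ = b / (δρ - r₁) ^ γ ∧
      r₂ ∈ Set.Ioo (0 : ℝ) δρ ∧ r₂ / zrpSigmaSq b γ = b / (δρ - r₂) ^ γ ∧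
      ∀ r ∈ Set.Ioo (0 : ℝ) δρ,
        r / zrpSigmaSq b γ = b / (δρ - r) ^ γ → r = r₁ ∨ r = r₂) :=
  current_matching_solutions_general b γ hγ0 hb hσ δρ hδρ c₀ hc₀
end

section
/- Let σ² > 0 be the critical variance, c_0 = ((1+γ)/γ)·(σ²·γ·b)^{1/(1+γ)} and δρ_trans = (σ²)^{1/(1+γ)}·(1+γ)·(2γ)^{−γ/(1+γ)}·(b/(1−γ))^{1/(1+γ)}. Then δρ_trans/c_0 = (1/2)·(2/(1−γ))^{1/(1+γ)} > 1; moreover, for δρ = δρ_trans there exists r_0 ∈ (0, δρ) satisfying both the current matching equation r_0/σ² = b/(δρ−r_0)^γ and the equal-depth condition r_0²/(2σ²) + (b/(1−γ))·(δρ−r_0)^{1−γ} = δρ²/(2σ²). -/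
open Filter Topology

/-!
Put `u = (2γσ²b/(1-γ))^{1/(1+γ)}`, the unique positive solution of `(1-γ) u^{1+γ} = 2γσ²b`, and
`r₀ = σ²b/u^γ = (1-γ)/(2γ) · u`. Then `δρ_trans = u + r₀ = (1+γ)/(2γ) · u`, so `δρ_trans - r₀ = u`
and the current matching equation holds by the choice of `r₀`; the equal-depth condition reduces,
after cancelling `r₀²`, to `(1-γ) u^{1+γ} = 2γσ²b`. The ratio `δρ_trans / c₀` exceeds `1` because
`log (2/(1-γ)) ≥ log 2 + γ > (1+γ) log 2`.
-/

open Real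

namespace ZeroRange

/-- Current matching between the fluid of density `r` and the condensate of mass `δ - r`. -/
def CurrentMatching (s b γ δ r : ℝ) : Prop :=
  r / s = b / (δ - r) ^ γ

/-- The Gaussian fluid cost of `r` plus the condensate cost of `δ - r` equals the cost of `δ`. -/
def EqualDepth (s b γ δ r : ℝ) : Prop :=
  r ^ 2 / (2 * s) + b / (1 - γ) * (δ - r) ^ (1 - γ) = δ ^ 2 / (2 * s)

theorem one_lt_half_mul_two_div_one_sub_rpow {γ : ℝ} (hγ0 : 0 < γ) (hγ1 : γ < 1) :
    1 < 1 / 2 * (2 / (1 - γ)) ^ (1 / (1 + γ)) := by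
  have h1γ : 0 < 1 - γ := by linarith
  have hlog2 : log 2 < 1 := by linarith [log_two_lt_d9]
  have hlog1γ : log (1 - γ) ≤ -γ := by linarith [log_le_sub_one_of_pos h1γ]
  have h2lt : (2 : ℝ) < (2 / (1 - γ)) ^ (1 / (1 + γ)) := by
    rw [lt_rpow_iff_log_lt (by norm_num) (by positivity), log_div (by norm_num) h1γ.ne',
      div_mul_eq_mul_div, one_mul, lt_div_iff₀ (by linarith)]
    nlinarith [mul_lt_mul_of_pos_left hlog2 hγ0]
  linarith

variable {s b γ u : ℝ}

theorem rpow_one_div_one_add_rpow_mul_self {x : ℝ} (hγ : 0 < 1 + γ) (hx : 0 ≤ x) :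
    (x ^ (1 / (1 + γ))) ^ γ * x ^ (1 / (1 + γ)) = x := by
  calc (x ^ (1 / (1 + γ))) ^ γ * x ^ (1 / (1 + γ)) = (x ^ (1 / (1 + γ))) ^ (γ + 1) := by
        rw [rpow_add' (by positivity) (by linarith), rpow_one]
    _ = x := by rw [add_comm γ 1, one_div, rpow_inv_rpow hx hγ.ne']

theorem transitionDensity_eq (hs : 0 ≤ s) (hb : 0 ≤ b) (hγ0 : 0 < γ) (hγ1 : γ < 1) :
    s ^ (1 / (1 + γ)) * (1 + γ) * (2 * γ) ^ (-(γ / (1 + γ))) * (b / (1 - γ)) ^ (1 / (1 + γ)) =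
      (1 + γ) / (2 * γ) * (2 * γ * s * b / (1 - γ)) ^ (1 / (1 + γ)) := by
  have h1γ : 0 < 1 - γ := by linarith
  have hexp : -(γ / (1 + γ)) = 1 / (1 + γ) - 1 := by field_simp; ring
  rw [hexp, rpow_sub_one (by positivity),
    show 2 * γ * s * b / (1 - γ) = 2 * γ * (s * (b / (1 - γ))) by ring,
    mul_rpow (x := 2 * γ) (by positivity) (by positivity), mul_rpow hs (by positivity)]
  ring

theorem transitionDensity_div_eq (hs : 0 < s) (hb : 0 < b) (hγ0 : 0 < γ) (hγ1 : γ < 1) :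
    (1 + γ) / (2 * γ) * (2 * γ * s * b / (1 - γ)) ^ (1 / (1 + γ)) /
        ((1 + γ) / γ * (s * γ * b) ^ (1 / (1 + γ))) =
      1 / 2 * (2 / (1 - γ)) ^ (1 / (1 + γ)) := by
  have h1γ : 0 < 1 - γ := by linarith
  rw [show 2 * γ * s * b / (1 - γ) = s * γ * b * (2 / (1 - γ)) by ring,
    mul_rpow (by positivity) (by positivity)]
  have : (s * γ * b) ^ (1 / (1 + γ)) ≠ 0 := by positivity
  field_simp

theorem div_rpow_eq_of_rpow_mul_self_eq (hu : 0 < u) (hγ0 : 0 < γ) (hγ1 : γ < 1)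
    (h : u ^ γ * u = 2 * γ * s * b / (1 - γ)) :
    s * b / u ^ γ = (1 - γ) / (2 * γ) * u := by
  have h1γ : 0 < 1 - γ := by linarith
  have : 0 < u ^ γ := by positivity
  rw [div_eq_iff this.ne', mul_assoc, mul_comm u, h]
  field_simp

theorem currentMatching_add_div_rpow (hs : s ≠ 0) (hu : 0 < u) :
    CurrentMatching s b γ (u + s * b / u ^ γ) (s * b / u ^ γ) := by
  have : u ^ γ ≠ 0 := by positivity
  rw [CurrentMatching, add_sub_cancel_right]
  field_simp

theorem equalDepth_add_div_rpow (hs : s ≠ 0) (hu : 0 < u) (hγ1 : γ < 1)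
    (h : u ^ γ * u = 2 * γ * s * b / (1 - γ)) :
    EqualDepth s b γ (u + s * b / u ^ γ) (s * b / u ^ γ) := by
  have h1γ : 1 - γ ≠ 0 := by linarith
  have : u ^ γ ≠ 0 := by positivity
  rw [EqualDepth, add_sub_cancel_right, rpow_sub hu, rpow_one]
  rw [eq_div_iff h1γ] at h
  field_simp
  linear_combination (-(u ^ γ * u)) * h

end ZeroRange

open ZeroRange in
/-- with `σ² = σ_c² > 0`, `c₀ = ((1+γ)/γ)·(σ²γb)^{1/(1+γ)}` and
`δρ_trans = (σ²)^{1/(1+γ)}·(1+γ)·(2γ)^{−γ/(1+γ)}·(b/(1−γ))^{1/(1+γ)}`, the ratio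
`δρ_trans/c₀ = (1/2)·(2/(1−γ))^{1/(1+γ)} > 1`, and at `δρ = δρ_trans` there exists
`r₀ ∈ (0,δρ)` satisfying the current matching equation and the equal-depth condition. -/
theorem transition_density (b γ : ℝ) (hγ0 : 0 < γ) (hγ1 : γ < 1) (hb : 0 < b)
    (hσ : 0 < zrpSigmaSq b γ)
    (c₀ δρt : ℝ) (hc₀ : c₀ = (1 + γ) / γ * (zrpSigmaSq b γ * γ * b) ^ (1 / (1 + γ)))
    (hδρt : δρt = (zrpSigmaSq b γ) ^ (1 / (1 + γ)) * (1 + γ) * (2 * γ) ^ (-(γ / (1 + γ))) *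
      (b / (1 - γ)) ^ (1 / (1 + γ))) :
    δρt / c₀ = 1 / 2 * (2 / (1 - γ)) ^ (1 / (1 + γ)) ∧
    1 < 1 / 2 * (2 / (1 - γ)) ^ (1 / (1 + γ)) ∧
    ∃ r₀ : ℝ, r₀ ∈ Set.Ioo (0 : ℝ) δρt ∧
      r₀ / zrpSigmaSq b γ = b / (δρt - r₀) ^ γ ∧
      r₀ ^ 2 / (2 * zrpSigmaSq b γ) + b / (1 - γ) * (δρt - r₀) ^ (1 - γ) =
        δρt ^ 2 / (2 * zrpSigmaSq b γ) := by
  set s := zrpSigmaSq b γ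
  have hA : 0 < 2 * γ * s * b / (1 - γ) := div_pos (by positivity) (by linarith)
  set u := (2 * γ * s * b / (1 - γ)) ^ (1 / (1 + γ))
  have hu : 0 < u := by positivity
  have hu_pow : u ^ γ * u = 2 * γ * s * b / (1 - γ) :=
    rpow_one_div_one_add_rpow_mul_self (by linarith) hA.le
  have hδ : δρt = (1 + γ) / (2 * γ) * u := hδρt.trans (transitionDensity_eq hσ.le hb.le hγ0 hγ1)
  have hδ' : δρt = u + s * b / u ^ γ := by
    rw [hδ, div_rpow_eq_of_rpow_mul_self_eq hu hγ0 hγ1 hu_pow]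
    field_simp
    ring
  refine ⟨by rw [hδ, hc₀]; exact transitionDensity_div_eq hσ hb hγ0 hγ1,
    one_lt_half_mul_two_div_one_sub_rpow hγ0 hγ1, s * b / u ^ γ, ?_⟩
  rw [hδ']
  exact ⟨⟨by positivity, lt_add_of_pos_left _ hu⟩, currentMatching_add_div_rpow hσ.ne' hu,
    equalDepth_add_div_rpow hσ.ne' hu hγ1 hu_pow⟩
end
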